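/- For every real number t, the exponential generating function of the Lucas-Fubini numbers satisfies Σ_{n=0}^{∞} 𝓛_n · t^n/n! = α · e^{(e^t − 1)α} + β · e^{(e^t − 1)β}, where α = (1+√5)/2 and β = (1−√5)/2; in particular the series on the left converges to this value. -/

import Mathlib

/-- Stirling numbers of the second kind. -/
def stirling2 : ℕ → ℕ → ℕ
  | 0, 0 => 1
  | 0, _ + 1 => 0
  | _ + 1, 0 => 0
  | n + 1, k + 1 => stirling2 n k + (k + 1) * stirling2 n (k + 1)

/-- Lucas numbers. -/
def lucas : ℕ → ℕ
  | 0 => 2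
  | 1 => 1
  | n + 2 => lucas n + lucas (n + 1)

/-- Lucas-Fubini numbers. -/
def lucasFubini (n : ℕ) : ℕ :=
  ∑ k ∈ Finset.range (n + 1), lucas (k + 1) * stirling2 n k


/-!
Expanding `m ^ n` in falling factorials with Stirling coefficients gives Dobinski's formula
`∑ₘ mⁿ xᵐ / m! = Tₙ(x) eˣ` for the Touchard polynomials `Tₙ(x) = ∑ₖ S(n,k) xᵏ`. Summing the
absolutely convergent double series `∑ₘ,ₙ (xᵐ / m!) (m t)ⁿ / n!` by rows and by columns
gives `∑ₙ Tₙ(x) tⁿ / n! = exp ((eᵗ - 1) x)`. Binet's formula `Lₖ = φᵏ + ψᵏ` turns the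
Lucas–Fubini number `𝓛ₙ` into `φ Tₙ(φ) + ψ Tₙ(ψ)`.
-/

open Finset Real
open scoped Nat

theorem stirling2_eq_stirlingSecond : stirling2 = Nat.stirlingSecond := by
  funext n k
  induction n generalizing k with
  | zero => cases k <;> rfl
  | succ n ih =>
    cases k with
    | zero => rfl
    | succ k => rw [stirling2, Nat.stirlingSecond_succ_succ, ih, ih, add_comm]

theorem Nat.mul_descFactorial (m k : ℕ) :
    m * m.descFactorial k = m.descFactorial (k + 1) + k * m.descFactorial k := by
  rcases le_or_gt k m with h | h
  · rw [descFactorial_succ, ← add_mul, Nat.sub_add_cancel h]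
  · simp [descFactorial_eq_zero_iff_lt.2 h]

theorem Nat.pow_eq_sum_stirlingSecond_mul_descFactorial (m n : ℕ) :
    m ^ n = ∑ k ∈ range (n + 1), stirlingSecond n k * m.descFactorial k := by
  induction n with
  | zero => simp
  | succ n ih =>
    set f : ℕ → ℕ := fun k => k * stirlingSecond n k * m.descFactorial k
    have shift : ∑ k ∈ range (n + 1), f k = ∑ k ∈ range (n + 1), f (k + 1) := by
      have top : f (n + 1) = 0 := by simp [f, stirlingSecond_eq_zero_of_lt n.lt_succ_self]
      rw [← add_zero (∑ k ∈ range (n + 1), f k), ← top, ← sum_range_succ, sum_range_succ']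
      simp [f]
    calc m ^ (n + 1)
        = ∑ k ∈ range (n + 1), stirlingSecond n k * (m * m.descFactorial k) := by
          rw [pow_succ, ih, sum_mul]; exact sum_congr rfl fun k _ => by ring
      _ = ∑ k ∈ range (n + 1), stirlingSecond n k * m.descFactorial (k + 1)
            + ∑ k ∈ range (n + 1), f k := by
          simp only [mul_descFactorial, mul_add, ← sum_add_distrib, f]
          exact sum_congr rfl fun k _ => by ring
      _ = ∑ k ∈ range (n + 1), stirlingSecond (n + 1) (k + 1) * m.descFactorial (k + 1) := by
          simp only [shift, stirlingSecond_succ_succ, f, ← sum_add_distrib]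
          exact sum_congr rfl fun k _ => by ring
      _ = ∑ k ∈ range (n + 2), stirlingSecond (n + 1) k * m.descFactorial k := by
          simp [sum_range_succ' _ (n + 1)]

theorem Real.hasSum_pow_div_factorial (x : ℝ) : HasSum (fun n : ℕ => x ^ n / n !) (exp x) :=
  exp_eq_exp_ℝ ▸ NormedSpace.expSeries_div_hasSum_exp x

theorem Real.hasSum_descFactorial_mul_pow_div_factorial (k : ℕ) (x : ℝ) :
    HasSum (fun m : ℕ => (m.descFactorial k : ℝ) * x ^ m / m !) (x ^ k * exp x) := by
  have head : ∑ m ∈ range k, (m.descFactorial k : ℝ) * x ^ m / m ! = 0 :=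
    sum_eq_zero fun m hm => by simp [Nat.descFactorial_eq_zero_iff_lt.2 (mem_range.1 hm)]
  rw [← hasSum_nat_add_iff' k, head, sub_zero]
  refine ((hasSum_pow_div_factorial x).mul_left (x ^ k)).congr_fun fun j => ?_
  have h := Nat.factorial_mul_descFactorial (Nat.le_add_left k j)
  rw [Nat.add_sub_cancel] at h
  rw [← h, pow_add]
  push_cast
  field_simp

noncomputable def touchard (n : ℕ) (x : ℝ) : ℝ :=
  ∑ k ∈ range (n + 1), (Nat.stirlingSecond n k : ℝ) * x ^ k

theorem hasSum_pow_mul_pow_div_factorial (n : ℕ) (x : ℝ) :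
    HasSum (fun m : ℕ => (m : ℝ) ^ n * x ^ m / m !) (touchard n x * exp x) := by
  have h := hasSum_sum fun k (_ : k ∈ range (n + 1)) =>
    (hasSum_descFactorial_mul_pow_div_factorial k x).mul_left (Nat.stirlingSecond n k : ℝ)
  have value : touchard n x * exp x =
      ∑ k ∈ range (n + 1), (Nat.stirlingSecond n k : ℝ) * (x ^ k * exp x) := by
    simp only [touchard, sum_mul, mul_assoc]
  rw [value]
  refine h.congr_fun fun m => ?_
  have expand : (m : ℝ) ^ n =
      ∑ k ∈ range (n + 1), (Nat.stirlingSecond n k : ℝ) * m.descFactorial k := by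
    exact_mod_cast Nat.pow_eq_sum_stirlingSecond_mul_descFactorial m n
  rw [expand, sum_mul, sum_div]
  exact sum_congr rfl fun k _ => by ring

theorem hasSum_prod_exp_mul_exp (x t : ℝ) :
    HasSum (fun p : ℕ × ℕ => x ^ p.1 / p.1 ! * ((p.1 * t) ^ p.2 / p.2 !))
      (exp (x * exp t)) := by
  have rows (x t : ℝ) (m : ℕ) : HasSum (fun n : ℕ => x ^ m / m ! * ((m * t) ^ n / n !))
      (x ^ m / m ! * exp (m * t)) :=
    (hasSum_pow_div_factorial _).mul_left _
  have rowSums (x t : ℝ) : HasSum (fun m : ℕ => x ^ m / m ! * exp (m * t)) (exp (x * exp t)) :=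
    (hasSum_pow_div_factorial _).congr_fun fun m => by rw [exp_nat_mul, mul_pow]; ring
  have summable : Summable fun p : ℕ × ℕ => x ^ p.1 / p.1 ! * ((p.1 * t) ^ p.2 / p.2 !) := by
    -- the norms form the same double series at `|x|`, `|t|`, whose terms are nonnegative
    refine Summable.of_norm ?_
    simp only [norm_mul, norm_div, norm_pow, Real.norm_eq_abs, Nat.abs_cast]
    exact (summable_prod_of_nonneg fun _ => by positivity).2 ⟨fun m => (rows |x| |t| m).summable,
      (rowSums |x| |t|).summable.congr fun m => (rows |x| |t| m).tsum_eq.symm⟩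
  exact (summable.hasSum.prod_fiberwise (rows x t)).unique (rowSums x t) ▸ summable.hasSum

theorem hasSum_touchard_mul_pow_div_factorial (x t : ℝ) :
    HasSum (fun n : ℕ => touchard n x * t ^ n / n !) (exp ((exp t - 1) * x)) := by
  have cols (n : ℕ) : HasSum (fun m : ℕ => x ^ m / m ! * ((m * t) ^ n / n !))
      (t ^ n / n ! * (touchard n x * exp x)) :=
    ((hasSum_pow_mul_pow_div_factorial n x).mul_left (t ^ n / n !)).congr_fun fun m => by ring
  have h := (((Equiv.prodComm ℕ ℕ).hasSum_iff.2 (hasSum_prod_exp_mul_exp x t)).prod_fiberwise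
    cols).mul_left (exp (-x))
  rw [← exp_add, show -x + x * exp t = (exp t - 1) * x by ring] at h
  refine h.congr_fun fun n => ?_
  rw [exp_neg]
  field_simp

theorem cast_lucas_eq : ∀ n : ℕ, (lucas n : ℝ) = goldenRatio ^ n + goldenConj ^ n
  | 0 => by norm_num [lucas]
  | 1 => by simp only [lucas, Nat.cast_one, pow_one, goldenRatio_add_goldenConj]
  | n + 2 => by
    rw [lucas, Nat.cast_add, cast_lucas_eq n, cast_lucas_eq (n + 1)]
    linear_combination (-goldenRatio ^ n) * goldenRatio_sq - goldenConj ^ n * goldenConj_sq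

theorem cast_lucasFubini_eq (n : ℕ) :
    (lucasFubini n : ℝ) =
      goldenRatio * touchard n goldenRatio + goldenConj * touchard n goldenConj := by
  simp only [lucasFubini, touchard, stirling2_eq_stirlingSecond, mul_sum, ← sum_add_distrib]
  push_cast
  exact sum_congr rfl fun k _ => by rw [cast_lucas_eq]; ring

open Real in
/-- Exponential generating function of the Lucas-Fubini numbers. -/
theorem lucasFubini_egf (t : ℝ) :
    HasSum (fun n : ℕ => (lucasFubini n : ℝ) * t ^ n / (n.factorial : ℝ))
      (((1 + Real.sqrt 5) / 2) * Real.exp ((Real.exp t - 1) * ((1 + Real.sqrt 5) / 2)) +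
        ((1 - Real.sqrt 5) / 2) * Real.exp ((Real.exp t - 1) * ((1 - Real.sqrt 5) / 2))) := by
  have h := ((hasSum_touchard_mul_pow_div_factorial goldenRatio t).mul_left goldenRatio).add
    ((hasSum_touchard_mul_pow_div_factorial goldenConj t).mul_left goldenConj)
  refine h.congr_fun fun n => ?_
  rw [cast_lucasFubini_eq]
  ring
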